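/- If an invertible real D×D matrix M is such that ηMᵗηM has no negative real eigenvalues, then M can be decomposed as M = λs with λ a Lorentz matrix (λᵗηλ = η) and s a symmetric matrix. -/

import Mathlib

/-!
Put `A = η Mᵀ η M`. Then `Mᵀ η M = η A` and `Aᵀ = η A η`. The spectrum of `A` avoids `(-∞, 0]`,
so `X` has a square root modulo the characteristic polynomial of `A`: modulo a prime factor `f`
take a real polynomial whose value at a root `z` of `f` is a square root of `z` (possible since
`z` is not real or is positive), lift it to powers of `f` by Newton's iteration, and glue the
prime powers by the Chinese remainder theorem. By Cayley–Hamilton this gives a polynomial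
square root `B = q(A)` of `A`, and as a polynomial in `A` it satisfies `Bᵀ = q(Aᵀ) = η B η`.
Hence `s = η B` is symmetric with `s η s = Mᵀ η M`, and `Λ = M s⁻¹` preserves `η`.
-/

open Polynomial Matrix

section SquareRootModulo

variable {R : Type*} [CommRing R]

theorem exists_mul_self_sub_dvd_pow_succ {f a q : R} (hq : f ∣ q * q - a)
    (hcop : IsCoprime f (2 * q)) (n : ℕ) :
    ∃ q' : R, f ^ (n + 1) ∣ q' * q' - a ∧ IsCoprime f (2 * q') := by
  induction n with
  | zero => exact ⟨q, by simpa using hq, hcop⟩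
  | succ n ih =>
    obtain ⟨q, ⟨w, hw⟩, hcop⟩ := ih
    obtain ⟨u, v, huv⟩ := id hcop
    -- Newton's step `q ↦ q - (q² - a) / (2q)`, with `v` an inverse of `2q` modulo `f`
    refine ⟨q - v * w * f ^ (n + 1), ⟨u * w + v * v * w * w * f ^ n, ?_⟩, ?_⟩
    · linear_combination hw - f ^ (n + 1) * w * huv
    · convert hcop.add_mul_left_right (-(2 * v * w * f ^ n)) using 1
      ring

theorem IsCoprime.exists_mul_self_sub_dvd_mul {x y a qx qy : R} (hxy : IsCoprime x y)
    (hx : x ∣ qx * qx - a) (hy : y ∣ qy * qy - a) : ∃ q : R, x * y ∣ q * q - a := by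
  obtain ⟨u, v, huv⟩ := id hxy
  have lift {d q q' : R} (hd : d ∣ q' * q' - a) (hq : d ∣ q - q') : d ∣ q * q - a := by
    have : q * q - a = (q - q') * (q + q') + (q' * q' - a) := by ring
    rw [this]
    exact dvd_add (hq.mul_right _) hd
  refine ⟨qy * u * x + qx * v * y, hxy.mul_dvd (lift hx ⟨(qy - qx) * u, ?_⟩)
    (lift hy ⟨(qx - qy) * v, ?_⟩)⟩
  · linear_combination qx * huv
  · linear_combination qy * huv

theorem exists_mul_self_sub_dvd_of_forall_prime_dvd [IsDomain R] [IsPrincipalIdealRing R]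
    {a p : R} (hp : p ≠ 0)
    (h : ∀ f : R, Prime f → f ∣ p → ∃ q : R, f ∣ q * q - a ∧ IsCoprime f (2 * q)) :
    ∃ q : R, p ∣ q * q - a := by
  induction p using UniqueFactorizationMonoid.induction_on_coprime with
  | h0 => exact absurd rfl hp
  | h1 hu => exact ⟨0, hu.dvd⟩
  | hpr i hf =>
    rename_i f
    cases i with
    | zero => exact ⟨0, by simp⟩
    | succ n =>
      obtain ⟨q, hq, hcop⟩ := h f hf (dvd_pow_self f n.succ_ne_zero)
      obtain ⟨q', hq', -⟩ := exists_mul_self_sub_dvd_pow_succ hq hcop n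
      exact ⟨q', hq'⟩
  | hcp hxy ihx ihy =>
    rename_i x y
    obtain ⟨qx, hqx⟩ := ihx (left_ne_zero_of_mul hp) fun f hf hfx => h f hf (hfx.mul_right y)
    obtain ⟨qy, hqy⟩ := ihy (right_ne_zero_of_mul hp) fun f hf hfy => h f hf (hfy.mul_left x)
    exact hxy.isCoprime.exists_mul_self_sub_dvd_mul hqx hqy

end SquareRootModulo

theorem Polynomial.dvd_of_prime_of_aeval_eq_zero {K A : Type*} [Field K] [Semiring A]
    [Nontrivial A] [Algebra K A] {f g : K[X]} (hf : Prime f) {z : A} (hfz : aeval z f = 0)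
    (hgz : aeval z g = 0) : f ∣ g := by
  by_contra hfg
  obtain ⟨u, v, huv⟩ := (hf.coprime_iff_not_dvd).2 hfg
  simpa [hfz, hgz] using congrArg (aeval z) huv

theorem Complex.exists_aeval_mul_self_eq {z : ℂ} (hz : z ∈ slitPlane) :
    ∃ q : ℝ[X], aeval z q * aeval z q = z := by
  by_cases him : z.im = 0
  · have hre : 0 < z.re := by simpa [him] using mem_slitPlane_iff.1 hz
    refine ⟨C √z.re, ?_⟩
    rw [aeval_C, Complex.coe_algebraMap, ← Complex.ofReal_mul, Real.mul_self_sqrt hre.le]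
    exact Complex.ext rfl him.symm
  · -- `1, z` is a real basis of `ℂ`, so a square root `w` of `z` is a real affine function of `z`
    obtain ⟨w, hw⟩ := IsAlgClosed.exists_pow_nat_eq z two_pos
    set b := w.im / z.im
    refine ⟨C (w.re - b * z.re) + C b * X, ?_⟩
    have hval : aeval z (C (w.re - b * z.re) + C b * X) = w := by
      apply Complex.ext
      · simp [b]
      · simp [b]
        field_simp
    rw [hval, ← sq, hw]

theorem Polynomial.exists_mul_self_sub_X_dvd {p : ℝ[X]}
    (hp : ∀ z : ℂ, aeval z p = 0 → z ∈ Complex.slitPlane) : ∃ q : ℝ[X], p ∣ q * q - X := by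
  have hp0 : p ≠ 0 := fun h => Complex.zero_notMem_slitPlane (hp 0 (by simp [h]))
  refine exists_mul_self_sub_dvd_of_forall_prime_dvd hp0 fun f hf hfp => ?_
  obtain ⟨z, hfz⟩ := IsAlgClosed.exists_aeval_eq_zero ℂ f
    (mt isUnit_iff_degree_eq_zero.2 hf.not_isUnit)
  have hz := hp z (aeval_eq_zero_of_dvd_aeval_eq_zero hfp hfz)
  obtain ⟨q, hq⟩ := Complex.exists_aeval_mul_self_eq hz
  refine ⟨q, dvd_of_prime_of_aeval_eq_zero hf hfz (by simp [hq]),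
    hf.coprime_iff_not_dvd.2 fun h2q => Complex.zero_notMem_slitPlane ?_⟩
  have := aeval_eq_zero_of_dvd_aeval_eq_zero h2q hfz
  simp only [map_mul, map_ofNat, mul_eq_zero, OfNat.ofNat_ne_zero, false_or] at this
  rwa [← hq, this, mul_zero] at hz

theorem Polynomial.aeval_units_conj {R A : Type*} [CommSemiring R] [Ring A] [Algebra R A]
    (u : Aˣ) (x : A) (q : R[X]) : aeval (u * x * ↑u⁻¹) q = u * aeval x q * ↑u⁻¹ := by
  simpa [ConjAct.units_smul_def] using
    aeval_algHom_apply (MulSemiringAction.toAlgHom R A (ConjAct.toConjAct u)) x q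

section MatrixSquareRoot

variable {n R : Type*} [Fintype n] [DecidableEq n] [CommRing R]

theorem Matrix.transpose_aeval (A : Matrix n n R) (q : R[X]) : (aeval A q)ᵀ = aeval Aᵀ q := by
  simpa [aeval_op_apply] using
    congrArg MulOpposite.unop (aeval_algHom_apply (transposeAlgEquiv n R R).toAlgHom A q).symm

theorem Matrix.mem_slitPlane_of_aeval_charpoly_eq_zero {A : Matrix n n ℝ} (hA : IsUnit A.det)
    (hneg : ∀ r : ℝ, r < 0 → ¬ (A.map (algebraMap ℝ ℂ)).charpoly.IsRoot (r : ℂ)) {z : ℂ}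
    (hz : aeval z A.charpoly = 0) : z ∈ Complex.slitPlane := by
  rw [Complex.mem_slitPlane_iff_not_le_zero, Complex.nonpos_iff]
  rintro ⟨hre, him⟩
  have hzre : z = (z.re : ℂ) := Complex.ext rfl (by simpa using him)
  rcases hre.lt_or_eq with hlt | heq
  · refine hneg z.re hlt ?_
    rwa [charpoly_map, IsRoot, eval_map_algebraMap, ← hzre]
  · rw [hzre, heq, Complex.ofReal_zero, ← coeff_zero_eq_aeval_zero', map_eq_zero] at hz
    simp [det_eq_sign_charpoly_coeff, hz] at hA

theorem Matrix.transpose_mul_inv_mul_mul_inv {η M s : Matrix n n R} (hs : sᵀ = s)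
    (hdet : IsUnit s.det) (h : s * η * s = Mᵀ * η * M) : (M * s⁻¹)ᵀ * η * (M * s⁻¹) = η := by
  calc (M * s⁻¹)ᵀ * η * (M * s⁻¹) = s⁻¹ * (Mᵀ * η * M) * s⁻¹ := by
        rw [transpose_mul, transpose_nonsing_inv, hs]; simp only [Matrix.mul_assoc]
    _ = s⁻¹ * s * η * (s * s⁻¹) := by rw [← h]; simp only [Matrix.mul_assoc]
    _ = η := by rw [nonsing_inv_mul s hdet, mul_nonsing_inv s hdet, Matrix.one_mul,
                  Matrix.mul_one]

theorem Matrix.exists_mul_symm_of_mul_self_eq {η M B : Matrix n n R} (hηT : ηᵀ = η)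
    (hη : η * η = 1) (hB : B * B = η * Mᵀ * η * M) (hBT : Bᵀ = η * B * η)
    (hBdet : IsUnit B.det) : ∃ Λ s : Matrix n n R, Λᵀ * η * Λ = η ∧ sᵀ = s ∧ M = Λ * s := by
  have hcancel (X : Matrix n n R) : η * (η * X) = X := by rw [← Matrix.mul_assoc, hη, one_mul]
  have hs : (η * B)ᵀ = η * B := by
    rw [transpose_mul, hBT, hηT, Matrix.mul_assoc, Matrix.mul_assoc, hη, Matrix.mul_one]
  have hsdet : IsUnit (η * B).det := by
    rw [det_mul]; exact (isUnit_det_of_left_inverse hη).mul hBdet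
  have hsηs : η * B * η * (η * B) = Mᵀ * η * M := by
    simp only [Matrix.mul_assoc, hcancel]; simp only [← Matrix.mul_assoc, hB, hη, one_mul]
  refine ⟨M * (η * B)⁻¹, η * B, transpose_mul_inv_mul_mul_inv hs hsdet hsηs, hs, ?_⟩
  rw [Matrix.mul_assoc, nonsing_inv_mul _ hsdet, Matrix.mul_one]

end MatrixSquareRoot

theorem stmt_11 (D : ℕ) (η M : Matrix (Fin D) (Fin D) ℝ)
    (hη : η = Matrix.diagonal (fun i : Fin D => if (i : ℕ) = 0 then (-1 : ℝ) else 1))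
    (hM : IsUnit M.det)
    (hneg : ∀ r : ℝ, r < 0 →
      ¬ (((η * Mᵀ * η * M).map (algebraMap ℝ ℂ)).charpoly.IsRoot (r : ℂ))) :
    ∃ (Λ s : Matrix (Fin D) (Fin D) ℝ), Λᵀ * η * Λ = η ∧ sᵀ = s ∧ M = Λ * s := by
  have hηT : ηᵀ = η := by rw [hη, diagonal_transpose]
  have hη2 : η * η = 1 := by
    rw [hη, diagonal_mul_diagonal, ← diagonal_one]
    congr 1; ext i; split_ifs <;> norm_num
  set A := η * Mᵀ * η * M
  have hA : IsUnit A.det := by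
    have hηdet := isUnit_det_of_left_inverse hη2
    simpa [A, det_mul] using ((hηdet.mul hM).mul hηdet).mul hM
  obtain ⟨q, ⟨t, ht⟩⟩ := exists_mul_self_sub_X_dvd fun z =>
    mem_slitPlane_of_aeval_charpoly_eq_zero hA hneg
  have hB : aeval A q * aeval A q = A := by
    simpa [aeval_self_charpoly, sub_eq_zero] using congrArg (aeval A) ht
  have hAT : Aᵀ = η * A * η := by
    simp only [A, transpose_mul, transpose_transpose, hηT, ← Matrix.mul_assoc, hη2, one_mul]
  have hBT : (aeval A q)ᵀ = η * aeval A q * η := by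
    rw [transpose_aeval, hAT]
    exact aeval_units_conj ⟨η, η, hη2, hη2⟩ A q
  have hBdet : IsUnit (aeval A q).det :=
    isUnit_of_mul_isUnit_left (by rwa [← det_mul, hB])
  exact exists_mul_symm_of_mul_self_eq hηT hη2 hB hBT hBdet
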